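/- Let (W_j)_{j∈ℕ} be a sequence of open subsets of ℂ, each containing the set 𝔻̄ ∪ [1,2] (closed unit disc together with the real interval [1,2]). Then there exists a sequence (φ_j)_{j∈ℕ} of holomorphic maps φ_j : 𝔻 → W_j such that (1) φ_j converges to the identity map of 𝔻 locally uniformly on 𝔻 as j → ∞, and (2) 2 ∈ φ_j(𝔻) for all j. -/

import Mathlib

/-! The disc is pushed out along `[1, 2]` by a thin holomorphic spike. The peak function
`q(z) = (1 + z) / (1 + z + T (1 - z))` maps `𝔻` into the right half of `𝔻`, equals `1` at `z = 1`
and is `O(1 / (T |1 - z|))` elsewhere; its power `p = q ^ a` with small `a > 0` takes values in a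
thin sector around `[0, 1]`. The map `φ z = z (1 + c p z)` with `c` slightly above `1` therefore
stays near `𝔻̄` where `|1 - z|` is not small (there `p` is tiny once `T` is large) and near `[1, 2]`
close to `z = 1`. On `[0, 1]` it is real and runs from `0` to `1 + c > 2`, so it hits `2`; letting
`T → ∞` makes `φ → id` locally uniformly. -/

open scoped Manifold Topology
open Set Metric Filter

noncomputable section

/-- The complex Euclidean space `ℂⁿ`. -/
abbrev CSpace (n : ℕ) : Type := EuclideanSpace ℂ (Fin n)

def peakFun (T : ℝ) (z : ℂ) : ℂ := (1 + z) / (1 + z + T * (1 - z))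

section Peak

variable {T : ℝ} {z : ℂ}

lemma normSq_peakFun_denom (T : ℝ) (z : ℂ) :
    Complex.normSq (1 + z + T * (1 - z)) =
      Complex.normSq (1 + z) + 2 * T * (1 - Complex.normSq z) + T ^ 2 * Complex.normSq (1 - z) := by
  simp only [Complex.normSq_apply, Complex.add_re, Complex.add_im, Complex.sub_re, Complex.sub_im,
    Complex.mul_re, Complex.mul_im, Complex.ofReal_re, Complex.ofReal_im, Complex.one_re,
    Complex.one_im]
  ring

lemma normSq_add_le_normSq_peakFun_denom (hT : 0 ≤ T) (hz : ‖z‖ ≤ 1) :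
    Complex.normSq (1 + z) + T ^ 2 * Complex.normSq (1 - z) ≤
      Complex.normSq (1 + z + T * (1 - z)) := by
  have hz2 : Complex.normSq z ≤ 1 := by
    rw [Complex.normSq_eq_norm_sq]; exact pow_le_one₀ (norm_nonneg z) hz
  rw [normSq_peakFun_denom]
  nlinarith [mul_nonneg hT (sub_nonneg.mpr hz2)]

lemma re_peakFun_pos (hT : 0 < T) (hz : ‖z‖ < 1) : 0 < (peakFun T z).re := by
  have hz2 : Complex.normSq z < 1 := by
    rw [Complex.normSq_eq_norm_sq]; exact pow_lt_one₀ (norm_nonneg z) hz two_ne_zero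
  have hnum : (1 + z).re * (1 + z + T * (1 - z)).re + (1 + z).im * (1 + z + T * (1 - z)).im =
      Complex.normSq (1 + z) + T * (1 - Complex.normSq z) := by
    simp only [Complex.normSq_apply, Complex.add_re, Complex.add_im, Complex.sub_re,
      Complex.sub_im, Complex.mul_re, Complex.mul_im, Complex.ofReal_re, Complex.ofReal_im,
      Complex.one_re, Complex.one_im]
    ring
  have hpos : 0 < Complex.normSq (1 + z) + T * (1 - Complex.normSq z) := by
    nlinarith [Complex.normSq_nonneg (1 + z), mul_pos hT (sub_pos.mpr hz2)]
  have hden : 0 < Complex.normSq (1 + z + T * (1 - z)) := by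
    rw [normSq_peakFun_denom]
    nlinarith [Complex.normSq_nonneg (1 - z), sq_nonneg T]
  rw [peakFun, Complex.div_re, ← add_div, hnum]
  exact div_pos hpos hden

lemma norm_peakFun_le_one (hT : 0 ≤ T) (hz : ‖z‖ ≤ 1) : ‖peakFun T z‖ ≤ 1 := by
  have : ‖1 + z‖ ≤ ‖1 + z + T * (1 - z)‖ := by
    rw [Complex.norm_def, Complex.norm_def]
    gcongr
    nlinarith [normSq_add_le_normSq_peakFun_denom hT hz, Complex.normSq_nonneg (1 - z)]
  rw [peakFun, norm_div]
  exact div_le_one_of_le₀ this (norm_nonneg _)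

lemma norm_peakFun_le {s : ℝ} (hT : 0 < T) (hs : 0 < s) (hz : ‖z‖ ≤ 1) (hsz : s ≤ ‖1 - z‖) :
    ‖peakFun T z‖ ≤ 2 / (T * s) := by
  have hnum : ‖1 + z‖ ≤ 2 := (norm_add_le _ _).trans (by simp; linarith)
  have hden : T * s ≤ ‖1 + z + T * (1 - z)‖ :=
    calc T * s ≤ T * ‖1 - z‖ := by gcongr
      _ = √(T ^ 2 * Complex.normSq (1 - z)) := by
        rw [Real.sqrt_mul (by positivity), Real.sqrt_sq hT.le, Complex.norm_def]
      _ ≤ ‖1 + z + T * (1 - z)‖ := by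
        rw [Complex.norm_def]
        gcongr
        linarith [normSq_add_le_normSq_peakFun_denom hT.le hz, Complex.normSq_nonneg (1 + z)]
  rw [peakFun, norm_div]
  exact div_le_div₀ zero_le_two hnum (by positivity) hden

end Peak

section SectorPower

variable {q : ℂ} {a : ℝ}

lemma norm_cpow_ofReal_le_one (hq : ‖q‖ ≤ 1) (ha : 0 ≤ a) : ‖q ^ (a : ℂ)‖ ≤ 1 := by
  rw [Complex.norm_cpow_real]
  exact Real.rpow_le_one (norm_nonneg q) hq ha

lemma norm_cpow_ofReal_le {σ : ℝ} (hσ : 0 ≤ σ) (ha : 0 < a) (hq : ‖q‖ ≤ σ ^ a⁻¹) :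
    ‖q ^ (a : ℂ)‖ ≤ σ := by
  rw [Complex.norm_cpow_real]
  calc ‖q‖ ^ a ≤ (σ ^ a⁻¹) ^ a := by gcongr
    _ = σ := Real.rpow_inv_rpow hσ ha.ne'

lemma abs_arg_mul_le (hq : 0 ≤ q.re) (ha0 : 0 ≤ a) : |q.arg * a| ≤ Real.pi / 2 * a := by
  rw [abs_mul, abs_of_nonneg ha0]
  gcongr
  exact Complex.abs_arg_le_pi_div_two_iff.mpr hq

lemma re_cpow_ofReal_nonneg (hq : 0 ≤ q.re) (ha0 : 0 ≤ a) (ha1 : a ≤ 1) :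
    0 ≤ (q ^ (a : ℂ)).re := by
  rw [Complex.cpow_ofReal_re]
  have h := (abs_arg_mul_le hq ha0).trans (mul_le_of_le_one_right (by positivity) ha1)
  exact mul_nonneg (by positivity) (Real.cos_nonneg_of_mem_Icc (abs_le.mp h))

lemma abs_im_cpow_ofReal_le (hq : 0 ≤ q.re) (hq1 : ‖q‖ ≤ 1) (ha : 0 ≤ a) :
    |(q ^ (a : ℂ)).im| ≤ Real.pi / 2 * a := by
  rw [Complex.cpow_ofReal_im, abs_mul, abs_of_nonneg (by positivity)]
  calc ‖q‖ ^ a * |Real.sin (q.arg * a)| ≤ 1 * |q.arg * a| :=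
        mul_le_mul (Real.rpow_le_one (norm_nonneg q) hq1 ha) Real.abs_sin_le_abs (abs_nonneg _)
          zero_le_one
    _ ≤ Real.pi / 2 * a := by rw [one_mul]; exact abs_arg_mul_le hq ha

end SectorPower

def spikeMap (c a T : ℝ) (z : ℂ) : ℂ := z * (1 + c * peakFun T z ^ (a : ℂ))

section Spike

variable {c a T : ℝ} {z : ℂ}

lemma differentiableOn_spikeMap (hT : 0 < T) :
    DifferentiableOn ℂ (spikeMap c a T) (ball 0 1) := by
  have hre : ∀ z ∈ ball (0 : ℂ) 1, 0 < (peakFun T z).re := fun z hz =>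
    re_peakFun_pos hT (mem_ball_zero_iff.mp hz)
  have hpeak : DifferentiableOn ℂ (peakFun T) (ball 0 1) := by
    refine DifferentiableOn.div (by fun_prop) (by fun_prop) fun z hz h0 => ?_
    simpa [peakFun, h0] using hre z hz
  exact differentiableOn_id.mul ((differentiableOn_const _).add ((differentiableOn_const _).mul
    (hpeak.cpow_const fun z hz => Complex.mem_slitPlane_iff.mpr (Or.inl (hre z hz)))))

lemma dist_spikeMap_self_le (hc : 0 ≤ c) (hz : ‖z‖ ≤ 1) :
    dist (spikeMap c a T z) z ≤ c * ‖peakFun T z ^ (a : ℂ)‖ := by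
  rw [dist_eq_norm, spikeMap, show z * (1 + c * peakFun T z ^ (a : ℂ)) - z =
    z * (c * peakFun T z ^ (a : ℂ)) by ring, norm_mul, norm_mul, Complex.norm_real,
    Real.norm_of_nonneg hc]
  exact mul_le_of_le_one_left (by positivity) hz

lemma norm_spikeMap_le (hc : 0 ≤ c) (hz : ‖z‖ ≤ 1) :
    ‖spikeMap c a T z‖ ≤ 1 + c * ‖peakFun T z ^ (a : ℂ)‖ :=
  calc ‖spikeMap c a T z‖ ≤ ‖z‖ + dist (spikeMap c a T z) z := by
        rw [dist_eq_norm]; exact norm_le_norm_add_norm_sub' _ _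
    _ ≤ 1 + c * ‖peakFun T z ^ (a : ℂ)‖ := add_le_add hz (dist_spikeMap_self_le hc hz)

lemma exists_dist_spikeMap_Icc_le (hT : 0 < T) (ha0 : 0 ≤ a) (ha1 : a ≤ 1) (hc : 1 ≤ c)
    (hc2 : c ≤ 2) (hz : ‖z‖ < 1) :
    ∃ y ∈ Icc (1 : ℝ) 2,
      dist (spikeMap c a T z) y ≤ 3 * ‖1 - z‖ + c * (Real.pi / 2 * a) + (c - 1) := by
  set p := peakFun T z ^ (a : ℂ)
  have hre := (re_peakFun_pos hT hz).le
  have hq1 := norm_peakFun_le_one hT.le hz.le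
  have hp0 : 0 ≤ p.re := re_cpow_ofReal_nonneg hre ha0 ha1
  have hp1 : ‖p‖ ≤ 1 := norm_cpow_ofReal_le_one hq1 ha0
  have hpim : |p.im| ≤ Real.pi / 2 * a := abs_im_cpow_ofReal_le hre hq1 ha0
  have hpre : p.re ≤ 1 := (Complex.re_le_norm p).trans hp1
  set x := 1 + c * p.re
  refine ⟨min x 2, ⟨le_min (by nlinarith) one_le_two, min_le_right _ _⟩, ?_⟩
  have hsplit : spikeMap c a T z - (min x 2 : ℝ) =
      (z - 1) * (1 + c * p) + (c * p.im : ℝ) * Complex.I + (x - min x 2 : ℝ) := by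
    apply Complex.ext <;> simp [spikeMap, p, x] <;> ring
  have h1 : ‖(z - 1) * (1 + c * p)‖ ≤ 3 * ‖1 - z‖ := by
    rw [norm_mul, norm_sub_rev, mul_comm]
    gcongr
    calc ‖1 + (c : ℂ) * p‖ ≤ 1 + c * 1 := by
          refine (norm_add_le _ _).trans ?_
          rw [norm_one, norm_mul, Complex.norm_real, Real.norm_of_nonneg (by linarith)]
          gcongr
      _ ≤ 3 := by linarith
  have h2 : ‖((c * p.im : ℝ) : ℂ) * Complex.I‖ ≤ c * (Real.pi / 2 * a) := by
    rw [norm_mul, Complex.norm_I, mul_one, Complex.norm_real, Real.norm_eq_abs, abs_mul,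
      abs_of_nonneg (by linarith : (0 : ℝ) ≤ c)]
    gcongr
  have h3 : ‖((x - min x 2 : ℝ) : ℂ)‖ ≤ c - 1 := by
    rw [Complex.norm_real, Real.norm_of_nonneg (sub_nonneg.mpr (min_le_left _ _))]
    rcases le_total x 2 with h | h
    · rw [min_eq_left h]; linarith
    · rw [min_eq_right h]; nlinarith
  rw [dist_eq_norm, hsplit]
  exact norm_add₃_le.trans (by linarith)

lemma two_mem_image_spikeMap (hT : 0 < T) (hc : 1 < c) :
    (2 : ℂ) ∈ spikeMap c a T '' ball 0 1 := by
  set Q : ℝ → ℝ := fun t => (1 + t) / (1 + t + T * (1 - t))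
  have hQ : ∀ t ∈ Icc (0 : ℝ) 1, 0 < Q t := fun t ht => by
    have : 0 ≤ T * (1 - t) := mul_nonneg hT.le (by linarith [ht.2])
    have := ht.1
    positivity
  set g : ℝ → ℝ := fun t => t * (1 + c * Q t ^ a)
  have hg : ∀ t ∈ Icc (0 : ℝ) 1, spikeMap c a T t = g t := fun t ht => by
    rw [spikeMap, peakFun, show (1 + (t : ℂ)) / (1 + t + T * (1 - t)) = (Q t : ℂ) by
      push_cast [Q]; rfl, ← Complex.ofReal_cpow (hQ t ht).le]
    push_cast [g]
    rfl
  have hcont : ContinuousOn g (Icc 0 1) := by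
    refine continuousOn_id.mul (continuousOn_const.add (continuousOn_const.mul ?_))
    refine ContinuousOn.rpow_const ?_ fun t ht => Or.inl (hQ t ht).ne'
    refine ContinuousOn.div (by fun_prop) (by fun_prop) fun t ht => ?_
    have : 0 ≤ T * (1 - t) := mul_nonneg hT.le (by linarith [ht.2])
    have := ht.1
    positivity
  have hg1 : g 1 = 1 + c := by simp [g, Q]
  obtain ⟨t, ht, hgt⟩ := intermediate_value_Icc zero_le_one hcont
    (show (2 : ℝ) ∈ Icc (g 0) (g 1) by simp only [g, zero_mul, hg1]; constructor <;> linarith)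
  have ht1 : t < 1 := lt_of_le_of_ne ht.2 fun h => by rw [h, hg1] at hgt; linarith
  refine ⟨t, ?_, ?_⟩
  · rw [mem_ball_zero_iff, Complex.norm_real, Real.norm_of_nonneg ht.1]; exact ht1
  · rw [hg t ht, hgt]; norm_num

end Spike

lemma norm_peakFun_cpow_le {a σ s : ℝ} {z : ℂ} (ha : 0 < a) (hσ : 0 < σ) (hs : 0 < s)
    (hz : ‖z‖ ≤ 1) (hsz : s ≤ ‖1 - z‖) :
    ‖peakFun (2 / (s * σ ^ a⁻¹)) z ^ (a : ℂ)‖ ≤ σ := by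
  have hT : 0 < 2 / (s * σ ^ a⁻¹) := by positivity
  refine norm_cpow_ofReal_le hσ.le ha ((norm_peakFun_le hT hs hz hsz).trans_eq ?_)
  field_simp

lemma exists_spikeMap {δ ε r : ℝ} (hδ : 0 < δ) (hε : 0 < ε) (hr : r < 1) :
    ∃ φ : ℂ → ℂ, DifferentiableOn ℂ φ (ball 0 1) ∧
      MapsTo φ (ball 0 1) (thickening δ (closedBall 0 1 ∪ Complex.ofReal '' Icc 1 2)) ∧
      (∀ z, ‖z‖ ≤ r → dist (φ z) z ≤ ε) ∧ (2 : ℂ) ∈ φ '' ball 0 1 := by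
  wlog hδ1 : δ ≤ 1 generalizing δ
  · obtain ⟨φ, hdiff, hmaps, hclose, htwo⟩ := this one_pos le_rfl
    exact ⟨φ, hdiff, hmaps.mono_right (thickening_mono (by linarith) _), hclose, htwo⟩
  -- Near `1` the distance to `[1, 2]` is at most `3 s + c π a / 2 + (c - 1) ≤ 3δ/8 + δ/4 + δ/4`;
  -- elsewhere the distance to `𝔻̄` is at most `c σ ≤ 5δ/32`.
  set c := 1 + δ / 4 with hc
  set a := δ / 10 with ha
  set σ := min (δ / 8) (ε / 2)
  set s := min (δ / 8) (1 - r)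
  have hc1 : 1 < c := by linarith
  have hc2 : c ≤ 5 / 4 := by linarith
  have ha0 : 0 < a := by positivity
  have ha1 : a ≤ 1 := by linarith
  have hσ : 0 < σ := lt_min (by positivity) (by positivity)
  have hs : 0 < s := lt_min (by positivity) (by linarith)
  set T := 2 / (s * σ ^ a⁻¹)
  have hT : 0 < T := by positivity
  have hsmall : ∀ z : ℂ, ‖z‖ ≤ 1 → s ≤ ‖1 - z‖ → ‖peakFun T z ^ (a : ℂ)‖ ≤ σ := fun z =>
    norm_peakFun_cpow_le ha0 hσ hs
  refine ⟨spikeMap c a T, differentiableOn_spikeMap hT, fun z hz => ?_,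
    fun z hz => ?_, two_mem_image_spikeMap hT hc1⟩
  · rw [mem_ball_zero_iff] at hz
    by_cases hzs : s ≤ ‖1 - z‖
    · refine thickening_subset_of_subset δ subset_union_left ?_
      rw [thickening_closedBall hδ zero_le_one, mem_ball_zero_iff]
      have hp := hsmall z hz.le hzs
      have : σ ≤ δ / 8 := min_le_left _ _
      calc ‖spikeMap c a T z‖ ≤ 1 + c * ‖peakFun T z ^ (a : ℂ)‖ :=
            norm_spikeMap_le (by positivity) hz.le
        _ < δ + 1 := by nlinarith
    · obtain ⟨y, hy, hdist⟩ := exists_dist_spikeMap_Icc_le hT ha0.le ha1 hc1.le (by linarith) hz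
      refine mem_thickening_iff.mpr ⟨y, Or.inr (mem_image_of_mem _ hy), hdist.trans_lt ?_⟩
      have : s ≤ δ / 8 := min_le_left _ _
      have : c * (Real.pi / 2 * a) ≤ 5 / 4 * (4 / 2 * a) := by gcongr; exact Real.pi_le_four
      linarith
  · have hz1 : 1 - r ≤ ‖1 - z‖ := by
      have := norm_sub_norm_le (1 : ℂ) z
      rw [norm_one] at this
      linarith
    calc dist (spikeMap c a T z) z ≤ c * σ :=
          (dist_spikeMap_self_le (by positivity) (by linarith)).trans
            (by gcongr; exact hsmall z (by linarith) ((min_le_right _ _).trans hz1))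
      _ ≤ 2 * (ε / 2) := mul_le_mul (by linarith) (min_le_right _ _) hσ.le zero_le_two
      _ = ε := by ring

lemma tendstoLocallyUniformlyOn_ball_of_dist_le {E F : Type*} [NormedAddCommGroup E]
    [PseudoMetricSpace F] {φ : ℕ → E → F} {f : E → F}
    (h : ∀ j : ℕ, ∀ z, ‖z‖ ≤ 1 - 1 / (j + 1) → dist (φ j z) (f z) ≤ 1 / (j + 1)) :
    TendstoLocallyUniformlyOn φ f atTop (ball 0 1) := by
  rw [Metric.tendstoLocallyUniformlyOn_iff]
  intro ε hε x hx
  rw [mem_ball_zero_iff] at hx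
  obtain ⟨r, hxr, hr1⟩ := exists_between hx
  refine ⟨ball 0 r, mem_nhdsWithin_of_mem_nhds (isOpen_ball.mem_nhds (mem_ball_zero_iff.mpr hxr)),
    ?_⟩
  filter_upwards [(tendsto_one_div_add_atTop_nhds_zero_nat (𝕜 := ℝ)).eventually
    (gt_mem_nhds (lt_min hε (sub_pos.mpr hr1)))] with j hj y hy
  rw [mem_ball_zero_iff] at hy
  rw [dist_comm]
  exact (h j y (by linarith [min_le_right ε (1 - r)])).trans_lt (hj.trans_le (min_le_left _ _))

/-- Given open sets `W j ⊆ ℂ` containing `𝔻̄ ∪ [1,2]`, there are holomorphic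
discs `φ j : 𝔻 → W j` converging locally uniformly on `𝔻` to the identity and with `2 ∈ φ j (𝔻)`
for all `j`. -/
theorem stmt_4 (W : ℕ → Set ℂ) (hWopen : ∀ j, IsOpen (W j))
    (hW : ∀ j, Metric.closedBall (0 : ℂ) 1 ∪ (Complex.ofReal '' Set.Icc (1 : ℝ) 2) ⊆ W j) :
    ∃ φ : ℕ → ℂ → ℂ,
      (∀ j, DifferentiableOn ℂ (φ j) (Metric.ball (0 : ℂ) 1)) ∧
      (∀ j, Set.MapsTo (φ j) (Metric.ball (0 : ℂ) 1) (W j)) ∧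
      TendstoLocallyUniformlyOn (fun j => φ j) id Filter.atTop (Metric.ball (0 : ℂ) 1) ∧
      (∀ j, (2 : ℂ) ∈ φ j '' Metric.ball (0 : ℂ) 1) := by
  have hK : IsCompact (closedBall (0 : ℂ) 1 ∪ Complex.ofReal '' Icc (1 : ℝ) 2) :=
    (isCompact_closedBall _ _).union (isCompact_Icc.image Complex.continuous_ofReal)
  choose δ hδ hδW using fun j => hK.exists_thickening_subset_open (hWopen j) (hW j)
  have hpos : ∀ j : ℕ, (0 : ℝ) < 1 / (j + 1) := fun _ => Nat.one_div_pos_of_nat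
  choose φ hdiff hmaps hclose htwo using fun j =>
    exists_spikeMap (hδ j) (hpos j) (sub_lt_self 1 (hpos j))
  exact ⟨φ, hdiff, fun j => (hmaps j).mono_right (hδW j),
    tendstoLocallyUniformlyOn_ball_of_dist_le hclose, htwo⟩
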